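/- For density matrices ρ and σ on a finite-dimensional Hilbert space, ‖ρ - σ‖₁ ≤ 2√(1 - F(ρ,σ)²), where F(ρ,σ) = tr√(σ^{1/2} ρ σ^{1/2}) is the fidelity. (Fuchs–van de Graaf inequality.) -/

import Mathlib

/-!
Measure both states in the eigenbasis `b` of `ρ - σ`, with outcome distributions `p` and `q`.
Then `‖ρ - σ‖₁ = ∑ |pᵢ - qᵢ|`, while the fidelity does not exceed the Bhattacharyya coefficient
`B = ∑ √(pᵢ qᵢ)`: writing `√(σ^{1/2} ρ σ^{1/2}) = Wᴴ ρ^{1/2} σ^{1/2}` with a contraction `W`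
(polar decomposition), `F = Re ∑ ⟨W σ^{1/2} bᵢ, ρ^{1/2} bᵢ⟩ ≤ ∑ ‖σ^{1/2} bᵢ‖ ‖ρ^{1/2} bᵢ‖`.
Classically, `∑ |pᵢ - qᵢ| = ∑ |√pᵢ - √qᵢ| (√pᵢ + √qᵢ) ≤ √((2 - 2B)(2 + 2B)) = 2 √(1 - B²)`
by Cauchy–Schwarz, and `0 ≤ F ≤ B`.
-/

open Matrix
open scoped ComplexOrder

/-- The trace norm `‖A‖₁ = tr |A|` of a Hermitian matrix, as the sum of the absolute
values of its eigenvalues. -/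
noncomputable def traceNorm {n : Type*} [Fintype n] [DecidableEq n]
    {A : Matrix n n ℂ} (hA : A.IsHermitian) : ℝ :=
  ∑ i, |hA.eigenvalues i|

/-- The positive semidefinite square root of a positive semidefinite matrix
(the definition `Matrix.PosSemidef.sqrt` of the older Mathlib, since removed). -/
noncomputable def Matrix.PosSemidef.sqrt {n : Type*} [Fintype n] [DecidableEq n]
    {𝕜 : Type*} [RCLike 𝕜] {A : Matrix n n 𝕜} (hA : A.PosSemidef) : Matrix n n 𝕜 :=
  hA.1.eigenvectorUnitary.1 * diagonal ((↑) ∘ (√·) ∘ hA.1.eigenvalues) *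
  (star hA.1.eigenvectorUnitary : Matrix n n 𝕜)

open scoped MatrixOrder

namespace Matrix.PosSemidef

variable {n 𝕜 : Type*} [Fintype n] [DecidableEq n] [RCLike 𝕜] {A : Matrix n n 𝕜}

lemma sqrt_eq_cfc (hA : A.PosSemidef) : hA.sqrt = cfc Real.sqrt A := by
  rw [hA.1.cfc_eq, IsHermitian.cfc, Unitary.conjStarAlgAut_apply]
  rfl

lemma sqrt_eq_cfcSqrt (hA : A.PosSemidef) : hA.sqrt = CFC.sqrt A := by
  rw [sqrt_eq_cfc, CFC.sqrt_eq_real_sqrt A hA.nonneg, cfcₙ_eq_cfc]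

lemma posSemidef_sqrt (hA : A.PosSemidef) : hA.sqrt.PosSemidef := by
  rw [sqrt_eq_cfcSqrt]
  exact (CFC.sqrt_nonneg A).posSemidef

lemma sqrt_mul_self (hA : A.PosSemidef) : hA.sqrt * hA.sqrt = A := by
  rw [sqrt_eq_cfcSqrt]
  exact CFC.sqrt_mul_sqrt_self A hA.nonneg

end Matrix.PosSemidef

namespace Matrix

variable {m n : Type*} [Fintype m] [Fintype n]

lemma star_mulVec_dotProduct {R : Type*} [NonUnitalSemiring R] [StarRing R] (S : Matrix m n R)
    (u : n → R) (v : m → R) : star (S *ᵥ u) ⬝ᵥ v = star u ⬝ᵥ (Sᴴ *ᵥ v) := by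
  rw [star_mulVec, dotProduct_mulVec]

lemma norm_star_dotProduct_le (a b : n → ℂ) :
    ‖star a ⬝ᵥ b‖ ≤ √(star a ⬝ᵥ a).re * √(star b ⬝ᵥ b).re := by
  calc ‖star a ⬝ᵥ b‖ = ‖inner ℂ (WithLp.toLp 2 a) (WithLp.toLp 2 b)‖ := by
        rw [EuclideanSpace.inner_toLp_toLp, dotProduct_comm]
    _ ≤ ‖WithLp.toLp 2 a‖ * ‖WithLp.toLp 2 b‖ := norm_inner_le_norm _ _
    _ = √(star a ⬝ᵥ a).re * √(star b ⬝ᵥ b).re := by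
        rw [norm_eq_sqrt_re_inner (𝕜 := ℂ), norm_eq_sqrt_re_inner (𝕜 := ℂ),
          EuclideanSpace.inner_toLp_toLp, EuclideanSpace.inner_toLp_toLp, dotProduct_comm a,
          dotProduct_comm b]
        rfl

variable [DecidableEq n]

lemma re_star_mulVec_dotProduct_mulVec_le {W : Matrix m n ℂ} (hW : Wᴴ * W ≤ 1) (u : n → ℂ) :
    (star (W *ᵥ u) ⬝ᵥ (W *ᵥ u)).re ≤ (star u ⬝ᵥ u).re := by
  have h := (le_iff.mp hW).re_dotProduct_nonneg u
  rw [sub_mulVec, dotProduct_sub, one_mulVec] at h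
  rw [star_mulVec_dotProduct, mulVec_mulVec]
  simpa [RCLike.re_to_complex] using h

lemma exists_contraction_conjTranspose_mul_eq_sqrt (A : Matrix m n ℂ) {M : Matrix n n ℂ}
    (hM : M.PosSemidef) (hAM : Aᴴ * A = M) :
    ∃ W : Matrix m n ℂ, Wᴴ * A = hM.sqrt ∧ Wᴴ * W ≤ 1 := by
  -- `T` inverts `√M` on its range; since `(√0)⁻¹ = 0`, the identities `(√x)⁻¹ * x = √x` and
  -- `√x * (√x)⁻¹ ≤ 1` hold for every real `x`, with no case split.
  set T := cfc (fun x : ℝ => (√x)⁻¹) M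
  have hT : Tᴴ = T := (cfc_predicate _ M : IsSelfAdjoint T).star_eq
  have hcont (f : ℝ → ℝ) : ContinuousOn f (spectrum ℝ M) := M.finite_real_spectrum.continuousOn f
  have hTM : T * M = hM.sqrt := by
    rw [hM.sqrt_eq_cfc, ← cfc_id' ℝ M, ← cfc_mul _ _ M (hcont _) (hcont _), cfc_id' ℝ M]
    congr 1
    funext x
    rw [inv_mul_eq_div, Real.div_sqrt]
  refine ⟨A * T, ?_, ?_⟩
  · rw [conjTranspose_mul, hT, Matrix.mul_assoc, hAM, hTM]
  · rw [conjTranspose_mul, hT, Matrix.mul_assoc, ← Matrix.mul_assoc Aᴴ, hAM,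
      ← Matrix.mul_assoc, hTM, hM.sqrt_eq_cfc, ← cfc_mul _ _ M (hcont _) (hcont _)]
    exact cfc_le_one _ M fun x _ => mul_inv_le_one

lemma trace_toEuclideanLin {𝕜 : Type*} [RCLike 𝕜] (A : Matrix n n 𝕜) :
    LinearMap.trace 𝕜 _ (toEuclideanLin A) = A.trace := by
  rw [toEuclideanLin, toLpLin_eq_toLin, LinearMap.trace_eq_matrix_trace 𝕜 (PiLp.basisFun 2 𝕜 n),
    LinearMap.toMatrix_toLin]

end Matrix

lemma OrthonormalBasis.sum_star_dotProduct_mulVec_eq_trace {ι n 𝕜 : Type*} [Fintype ι]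
    [Fintype n] [DecidableEq n] [RCLike 𝕜] (b : OrthonormalBasis ι 𝕜 (EuclideanSpace 𝕜 n))
    (A : Matrix n n 𝕜) : ∑ i, star ⇑(b i) ⬝ᵥ (A *ᵥ ⇑(b i)) = A.trace := by
  rw [← trace_toEuclideanLin, LinearMap.trace_eq_sum_inner _ b]
  simp only [EuclideanSpace.inner_eq_star_dotProduct, toLpLin_apply, dotProduct_comm]

section Measurement

variable {ι n : Type*} [Fintype ι] [Fintype n] (b : OrthonormalBasis ι ℂ (EuclideanSpace ℂ n))

noncomputable def measurementDistribution (A : Matrix n n ℂ) (i : ι) : ℝ :=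
  (star ⇑(b i) ⬝ᵥ (A *ᵥ ⇑(b i))).re

lemma measurementDistribution_nonneg {A : Matrix n n ℂ} (hA : A.PosSemidef) (i : ι) :
    0 ≤ measurementDistribution b A i := by
  simpa [measurementDistribution, RCLike.re_to_complex] using hA.re_dotProduct_nonneg (b i)

lemma measurementDistribution_sub (A B : Matrix n n ℂ) :
    measurementDistribution b (A - B) =
      measurementDistribution b A - measurementDistribution b B := by
  funext i
  simp [measurementDistribution, sub_mulVec, dotProduct_sub]

variable [DecidableEq n]

lemma sum_measurementDistribution (A : Matrix n n ℂ) :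
    ∑ i, measurementDistribution b A i = A.trace.re := by
  rw [← b.sum_star_dotProduct_mulVec_eq_trace, Complex.re_sum]
  rfl

lemma traceNorm_eq_sum_abs_measurementDistribution {A : Matrix n n ℂ} (hA : A.IsHermitian) :
    traceNorm hA = ∑ i, |measurementDistribution hA.eigenvectorBasis A i| :=
  Finset.sum_congr rfl fun i _ => by rw [hA.eigenvalues_eq i]; rfl

lemma re_trace_sqrt_le_sum_sqrt_mul_sqrt {ρ σ : Matrix n n ℂ} (hρ : ρ.PosSemidef)
    (hσ : σ.PosSemidef) (hM : (hσ.sqrt * ρ * hσ.sqrt).PosSemidef) :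
    hM.sqrt.trace.re ≤
      ∑ i, √(measurementDistribution b ρ i) * √(measurementDistribution b σ i) := by
  have hAM : (hρ.sqrt * hσ.sqrt)ᴴ * (hρ.sqrt * hσ.sqrt) = hσ.sqrt * ρ * hσ.sqrt := by
    rw [conjTranspose_mul, hρ.posSemidef_sqrt.1.eq, hσ.posSemidef_sqrt.1.eq, Matrix.mul_assoc,
      ← Matrix.mul_assoc hρ.sqrt, hρ.sqrt_mul_self, Matrix.mul_assoc]
  obtain ⟨W, hWA, hW⟩ := exists_contraction_conjTranspose_mul_eq_sqrt _ hM hAM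
  have hsqrt {S : Matrix n n ℂ} (hS : S.PosSemidef) (i : ι) :
      (star (hS.sqrt *ᵥ ⇑(b i)) ⬝ᵥ (hS.sqrt *ᵥ ⇑(b i))).re = measurementDistribution b S i := by
    rw [star_mulVec_dotProduct, mulVec_mulVec, hS.posSemidef_sqrt.1.eq, hS.sqrt_mul_self]
    rfl
  have htrace : hM.sqrt.trace =
      ∑ i, star (W *ᵥ (hσ.sqrt *ᵥ ⇑(b i))) ⬝ᵥ (hρ.sqrt *ᵥ ⇑(b i)) := by
    rw [← hWA, ← Matrix.mul_assoc, trace_mul_cycle, ← b.sum_star_dotProduct_mulVec_eq_trace]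
    refine Finset.sum_congr rfl fun i _ => ?_
    rw [mulVec_mulVec, star_mulVec_dotProduct, mulVec_mulVec, conjTranspose_mul,
      hσ.posSemidef_sqrt.1.eq]
  rw [htrace, Complex.re_sum]
  refine Finset.sum_le_sum fun i _ => ?_
  calc _ ≤ ‖star (W *ᵥ (hσ.sqrt *ᵥ ⇑(b i))) ⬝ᵥ (hρ.sqrt *ᵥ ⇑(b i))‖ := Complex.re_le_norm _
    _ ≤ √(star (W *ᵥ (hσ.sqrt *ᵥ ⇑(b i))) ⬝ᵥ (W *ᵥ (hσ.sqrt *ᵥ ⇑(b i)))).re *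
          √(star (hρ.sqrt *ᵥ ⇑(b i)) ⬝ᵥ (hρ.sqrt *ᵥ ⇑(b i))).re := norm_star_dotProduct_le _ _
    _ ≤ √(measurementDistribution b σ i) * √(measurementDistribution b ρ i) := by
      rw [← hsqrt hσ, ← hsqrt hρ]
      exact mul_le_mul_of_nonneg_right
        (Real.sqrt_le_sqrt (re_star_mulVec_dotProduct_mulVec_le hW _)) (Real.sqrt_nonneg _)
    _ = _ := mul_comm _ _

end Measurement

theorem sum_abs_sub_le_two_mul_sqrt_one_sub_sq {ι : Type*} [Fintype ι] {p q : ι → ℝ}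
    (hp : ∀ i, 0 ≤ p i) (hq : ∀ i, 0 ≤ q i) (hp1 : ∑ i, p i = 1) (hq1 : ∑ i, q i = 1) :
    ∑ i, |p i - q i| ≤ 2 * √(1 - (∑ i, √(p i) * √(q i)) ^ 2) := by
  set B := ∑ i, √(p i) * √(q i)
  have hp' (i : ι) : √(p i) ^ 2 = p i := Real.sq_sqrt (hp i)
  have hq' (i : ι) : √(q i) ^ 2 = q i := Real.sq_sqrt (hq i)
  have hfactor (i : ι) : |p i - q i| = |√(p i) - √(q i)| * (√(p i) + √(q i)) := by
    rw [← abs_of_nonneg (by positivity : 0 ≤ √(p i) + √(q i)), ← abs_mul, mul_comm,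
      ← sq_sub_sq, hp', hq']
  have hminus : ∑ i, |√(p i) - √(q i)| ^ 2 = 2 - 2 * B := by
    simp only [sq_abs, sub_sq, hp', hq', Finset.sum_add_distrib, Finset.sum_sub_distrib,
      mul_assoc, ← Finset.mul_sum, hp1, hq1, B]
    ring
  have hplus : ∑ i, (√(p i) + √(q i)) ^ 2 = 2 + 2 * B := by
    simp only [add_sq, hp', hq', Finset.sum_add_distrib, mul_assoc, ← Finset.mul_sum, hp1, hq1, B]
    ring
  have hB : 0 ≤ 2 - 2 * B := hminus ▸ Finset.sum_nonneg fun i _ => sq_nonneg _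
  calc ∑ i, |p i - q i| = ∑ i, |√(p i) - √(q i)| * (√(p i) + √(q i)) :=
        Finset.sum_congr rfl fun i _ => hfactor i
    _ ≤ √(∑ i, |√(p i) - √(q i)| ^ 2) * √(∑ i, (√(p i) + √(q i)) ^ 2) :=
        Real.sum_mul_le_sqrt_mul_sqrt _ _ _
    _ = √(2 ^ 2 * (1 - B ^ 2)) := by
        rw [hminus, hplus, ← Real.sqrt_mul hB]
        ring_nf
    _ = 2 * √(1 - B ^ 2) := by
        rw [Real.sqrt_mul (by positivity), Real.sqrt_sq zero_le_two]

/-- Fuchs–van de Graaf: for density matrices `ρ, σ`,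
`‖ρ - σ‖₁ ≤ 2 √(1 - F(ρ,σ)²)`, where the fidelity is
`F(ρ,σ) = tr √(σ^{1/2} ρ σ^{1/2})`. (The hypothesis `hM`, positive semidefiniteness of
`σ^{1/2} ρ σ^{1/2}`, always holds; it is included so that its square root is defined.) -/
theorem stmt4 {n : Type*} [Fintype n] [DecidableEq n]
    (ρ σ : Matrix n n ℂ)
    (hρ : ρ.PosSemidef) (hσ : σ.PosSemidef)
    (hρ1 : ρ.trace = 1) (hσ1 : σ.trace = 1)
    (hM : (hσ.sqrt * ρ * hσ.sqrt).PosSemidef) :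
    traceNorm (hρ.1.sub hσ.1) ≤ 2 * Real.sqrt (1 - (hM.sqrt.trace).re ^ 2) := by
  set b := (hρ.1.sub hσ.1).eigenvectorBasis
  set p := measurementDistribution b ρ
  set q := measurementDistribution b σ
  have hF0 : 0 ≤ hM.sqrt.trace.re := (Complex.nonneg_iff.mp hM.posSemidef_sqrt.trace_nonneg).1
  have hFB := re_trace_sqrt_le_sum_sqrt_mul_sqrt b hρ hσ hM
  have hsum {A : Matrix n n ℂ} (hA : A.trace = 1) : ∑ i, measurementDistribution b A i = 1 := by
    rw [sum_measurementDistribution, hA, Complex.one_re]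
  calc traceNorm (hρ.1.sub hσ.1) = ∑ i, |p i - q i| := by
        rw [traceNorm_eq_sum_abs_measurementDistribution, measurementDistribution_sub]
        rfl
    _ ≤ 2 * √(1 - (∑ i, √(p i) * √(q i)) ^ 2) :=
        sum_abs_sub_le_two_mul_sqrt_one_sub_sq (measurementDistribution_nonneg b hρ)
          (measurementDistribution_nonneg b hσ) (hsum hρ1) (hsum hσ1)
    _ ≤ 2 * √(1 - hM.sqrt.trace.re ^ 2) := by gcongr
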